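/- arXiv:1712.08939 — 6 statements merged into one kernel-verified Lean document; each statement's English description precedes it below -/
import Mathlib

section
/- Let p = ((T,r), λ) be a pattern tree over a relational signature σ, D a database, and μ a mapping with dom(μ) ⊆ var(T) that is a pp-solution of p over D. Then among all subtrees T' of T containing the root r with var(T') = dom(μ) and μ : λ(T') → D there is a unique maximal one T_μ, i.e., a witnessing subtree that contains every other witnessing subtree. -/
namespace PTEval

/-- A relational signature: a type of relation symbols, each with an arity. -/
structure Sig where
  Rel : Type
  ar : Rel → ℕ

/-- A relational atom over signature `σ` with variables from `V`. -/
structure Atom (σ : Sig) (V : Type) where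
  R : σ.Rel
  args : Fin (σ.ar R) → V

/-- A σ-structure (database) whose domain is the whole type `A`. -/
structure Db (σ : Sig) (A : Type) where
  rel : ∀ R : σ.Rel, Set (Fin (σ.ar R) → A)

/-- The set of variables occurring in an atom. -/
def Atom.vars {σ : Sig} {V : Type} (τ : Atom σ V) : Set V :=
  Set.range τ.args

/-- The set of variables occurring in a set of atoms. -/
def varsOf {σ : Sig} {V : Type} (𝒜 : Set (Atom σ V)) : Set V :=
  ⋃ τ ∈ 𝒜, τ.vars

/-- The mapping `μ` sends the atom `τ` to a fact of the database `D`. -/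
def satAtom {σ : Sig} {V A : Type} (μ : V → A) (D : Db σ A) (τ : Atom σ V) : Prop :=
  (fun i => μ (τ.args i)) ∈ D.rel τ.R

/-- The mapping `μ`, with domain of definition `dμ`, maps the set of atoms `𝒜`
into the database `D` (written `μ : 𝒜 → D` in the paper). -/
def mapsInto {σ : Sig} {V A : Type} (dμ : Set V) (μ : V → A) (𝒜 : Set (Atom σ V))
    (D : Db σ A) : Prop :=
  varsOf 𝒜 ⊆ dμ ∧ ∀ τ ∈ 𝒜, satAtom μ D τ

/-- A rooted tree on the type of nodes `N`, presented by its parent function: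
the root is a fixed point of `parent` and every node reaches the root by
iterating `parent`. -/
structure RootedTree (N : Type) where
  root : N
  parent : N → N
  parent_root : parent root = root
  reaches_root : ∀ v : N, ∃ n : ℕ, parent^[n] v = root

/-- `a` is an ancestor of `b` in `T` (possibly `a = b`), i.e. `a` lies on the
path from the root to `b`. -/
def RootedTree.anc {N : Type} (T : RootedTree N) (a b : N) : Prop :=
  ∃ n : ℕ, T.parent^[n] b = a

/-- A subtree of `T` containing the root: a set of nodes containing the root
and closed under taking parents. -/
def RootedTree.IsRootedSubtree {N : Type} (T : RootedTree N) (S : Set N) : Prop :=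
  T.root ∈ S ∧ ∀ v ∈ S, T.parent v ∈ S

/-- `t` is a child of the rooted subtree `S`: it is outside `S` but its parent
belongs to `S`. -/
def RootedTree.IsChildOf {N : Type} (T : RootedTree N) (S : Set N) (t : N) : Prop :=
  t ∉ S ∧ T.parent t ∈ S

/-- The set of nodes `S` induces a connected subgraph of the tree `T`:
it is empty, or it has a topmost node `top` which is an ancestor of all its
members and `S` contains every node between `top` and any of its members. -/
def RootedTree.IsConnectedSet {N : Type} (T : RootedTree N) (S : Set N) : Prop :=
  S = ∅ ∨ ∃ top ∈ S, ∀ s ∈ S, T.anc top s ∧ ∀ v : N, T.anc top v → T.anc v s → v ∈ S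

/-- The set of atoms labelling a set of nodes, `λ(T')`. -/
def lamOf {σ : Sig} {V N : Type} (lam : N → Set (Atom σ V)) (S : Set N) : Set (Atom σ V) :=
  ⋃ t ∈ S, lam t

/-- The set of variables appearing in the labels of a set of nodes, `var(T')`. -/
def varsLam {σ : Sig} {V N : Type} (lam : N → Set (Atom σ V)) (S : Set N) : Set V :=
  varsOf (lamOf lam S)

/-- `S` is a subtree of `T` containing the root that witnesses that `μ`
(with domain of definition `dμ`) is a pp-solution of `((T,r),λ)` over `D`:
`var(S) = dom(μ)` and `μ : λ(S) → D`. -/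
def ppWitness {σ : Sig} {V N A : Type} (T : RootedTree N) (lam : N → Set (Atom σ V))
    (D : Db σ A) (dμ : Set V) (μ : V → A) (S : Set N) : Prop :=
  T.IsRootedSubtree S ∧ varsLam lam S = dμ ∧ mapsInto dμ μ (lamOf lam S) D

/-- If `μ` (with `dom(μ) ⊆ var(T)`) is a pp-solution of the
pattern tree `p = ((T,r),λ)` over the database `D`, then among all witnessing
subtrees there is a unique maximal one `T_μ`, containing every other
witnessing subtree. -/
theorem stmt0 {σ : Sig} {N V A : Type} [Finite N] [Finite A]
    (T : RootedTree N) (lam : N → Set (Atom σ V)) (hlamfin : ∀ t : N, (lam t).Finite)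
    (D : Db σ A) (dμ : Set V) (μ : V → A)
    (hdom : dμ ⊆ varsLam lam Set.univ)
    (hpp : ∃ S : Set N, ppWitness T lam D dμ μ S) :
    ∃! S : Set N, ppWitness T lam D dμ μ S ∧
      ∀ S' : Set N, ppWitness T lam D dμ μ S' → S' ⊆ S := by

    obtain ⟨S0, hS0⟩ := hpp
    set W : Set (Set N) := {S | ppWitness T lam D dμ μ S} with hW
    refine ⟨⋃₀ W, ⟨⟨⟨?_, ?_⟩, ?_, ?_, ?_⟩, ?_⟩, ?_⟩
    · exact ⟨S0, hS0, hS0.1.1⟩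
    · rintro v ⟨S', hS', hv⟩
      exact ⟨S', hS', hS'.1.2 v hv⟩
    · apply Set.Subset.antisymm
      · rintro x hx
        simp only [varsLam, varsOf, lamOf, Set.mem_iUnion] at hx
        obtain ⟨τ, ⟨t, ⟨S', hS', ht⟩, hτ⟩, hxτ⟩ := hx
        rw [← hS'.2.1]
        simp only [varsLam, varsOf, lamOf, Set.mem_iUnion]
        exact ⟨τ, ⟨t, ht, hτ⟩, hxτ⟩
      · rw [← hS0.2.1]
        rintro x hx
        simp only [varsLam, varsOf, lamOf, Set.mem_iUnion] at hx ⊢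
        obtain ⟨τ, ⟨t, ht, hτ⟩, hxτ⟩ := hx
        exact ⟨τ, ⟨t, ⟨S0, hS0, ht⟩, hτ⟩, hxτ⟩
    · rintro x hx
      simp only [varsOf, lamOf, Set.mem_iUnion] at hx
      obtain ⟨τ, ⟨t, ⟨S', hS', ht⟩, hτ⟩, hxτ⟩ := hx
      rw [← hS'.2.1]
      simp only [varsLam, varsOf, lamOf, Set.mem_iUnion]
      exact ⟨τ, ⟨t, ht, hτ⟩, hxτ⟩
    · rintro τ hτ
      simp only [lamOf, Set.mem_iUnion] at hτ
      obtain ⟨t, ⟨S', hS', ht⟩, hτ⟩ := hτ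
      apply hS'.2.2.2
      simp only [lamOf, Set.mem_iUnion]
      exact ⟨t, ht, hτ⟩
    · exact fun S' hS' => Set.subset_sUnion_of_mem hS'
    · rintro S ⟨hS, hmax⟩
      apply Set.Subset.antisymm
      · exact Set.subset_sUnion_of_mem hS
      · exact Set.sUnion_subset fun S' hS' => hmax S' hS'


end PTEval
end

section
/- Let p = ((T,r), λ) be a pattern tree over a relational signature σ, D a database, and μ a mapping with dom(μ) ⊆ var(T). Let N = {t ∈ V(T) : var(t) ⊆ dom(μ) and μ maps every atom of λ(t) to a fact of D}. Then μ is a pp-solution of p over D if and only if r ∈ N and var(T') = dom(μ), where T' is the unique maximal subtree of T containing r all of whose nodes belong to N (such a maximal subtree exists whenever r ∈ N). -/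
namespace PTEval

/-- `μ` is a pp-solution of `p = ((T,r),λ)` over `D` iff
`r ∈ N₀` and `var(T') = dom(μ)`, where
`N₀ = {t : var(t) ⊆ dom(μ) and μ maps every atom of λ(t) to a fact of D}` and
`T'` is the unique maximal subtree of `T` containing `r` all of whose nodes
belong to `N₀` (which exists whenever `r ∈ N₀`). -/
theorem stmt1 {σ : Sig} {N V A : Type} [Finite N] [Finite A]
    (T : RootedTree N) (lam : N → Set (Atom σ V)) (hlamfin : ∀ t : N, (lam t).Finite)
    (D : Db σ A) (dμ : Set V) (μ : V → A)
    (hdom : dμ ⊆ varsLam lam Set.univ)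
    (N₀ : Set N)
    (hN₀ : N₀ = {t : N | varsOf (lam t) ⊆ dμ ∧ ∀ τ ∈ lam t, satAtom μ D τ}) :
    (∃ S : Set N, ppWitness T lam D dμ μ S) ↔
      (T.root ∈ N₀ ∧
        ∃ T' : Set N,
          (T.IsRootedSubtree T' ∧ T' ⊆ N₀ ∧
            ∀ S : Set N, T.IsRootedSubtree S → S ⊆ N₀ → S ⊆ T') ∧
          varsLam lam T' = dμ) := by
  have hvars : ∀ S : Set N, varsLam lam S = ⋃ t ∈ S, varsOf (lam t) := by
    intro S
    simp only [varsLam, varsOf, lamOf]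
    ext v
    simp only [Set.mem_iUnion]
    constructor
    · rintro ⟨τ, ⟨t, ht, hτ⟩, hv⟩
      exact ⟨t, ht, τ, hτ, hv⟩
    · rintro ⟨t, ht, τ, hτ, hv⟩
      exact ⟨τ, ⟨t, ht, hτ⟩, hv⟩
  -- maximal subtree in N₀
  set T'' : Set N := {t : N | ∀ n : ℕ, T.parent^[n] t ∈ N₀} with hT''
  have hsub : T'' ⊆ N₀ := fun t ht => ht 0
  have hmax : ∀ S : Set N, T.IsRootedSubtree S → S ⊆ N₀ → S ⊆ T'' := by
    intro S hS hSN t ht n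
    induction n with
    | zero => exact hSN ht
    | succ k ih =>
      have : ∀ m : ℕ, T.parent^[m] t ∈ S := by
        intro m
        induction m with
        | zero => exact ht
        | succ j ihj => rw [Function.iterate_succ_apply']; exact hS.2 _ ihj
      exact hSN (this (k + 1))
  have hclosed : ∀ v ∈ T'', T.parent v ∈ T'' := by
    intro v hv n
    rw [← Function.iterate_succ_apply]
    exact hv (n + 1)
  constructor
  · rintro ⟨S, hSsub, hSvar, hmi⟩
    have hSN₀ : S ⊆ N₀ := by
      intro t ht
      rw [hN₀]
      constructor
      · intro v hv
        rw [← hSvar, hvars]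
        exact Set.mem_iUnion₂.2 ⟨t, ht, hv⟩
      · intro τ hτ
        exact hmi.2 τ (Set.mem_iUnion₂.2 ⟨t, ht, hτ⟩)
    have hroot : T.root ∈ N₀ := hSN₀ hSsub.1
    have hrootT'' : T'' ∈ {S : Set N | T.IsRootedSubtree S} := by
      refine ⟨?_, hclosed⟩
      intro n
      simp [Function.iterate_fixed T.parent_root, hroot]
    refine ⟨hroot, T'', ⟨hrootT'', hsub, hmax⟩, ?_⟩
    apply Set.Subset.antisymm
    · rw [hvars]
      intro v hv
      rcases Set.mem_iUnion₂.1 hv with ⟨t, ht, hvt⟩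
      have := hsub ht
      rw [hN₀] at this
      exact this.1 hvt
    · rw [← hSvar]
      rw [hvars, hvars]
      exact Set.iUnion₂_mono' fun t ht => ⟨t, hmax S hSsub hSN₀ ht, le_refl _⟩
  · rintro ⟨hroot, T', ⟨hT'sub, hT'N₀, _⟩, hT'var⟩
    refine ⟨T', hT'sub, hT'var, ?_, ?_⟩
    · rw [show varsOf (lamOf lam T') = varsLam lam T' from rfl, hT'var]
    · intro τ hτ
      rcases Set.mem_iUnion₂.1 hτ with ⟨t, ht, hτt⟩
      have := hT'N₀ ht
      rw [hN₀] at this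
      exact this.2 τ hτt

end PTEval
end

section
/- Let A, B, C be σ-structures with dom(A) ⊆ dom(A ∪ B) and let h : A → C be a homomorphism. Let be the structure A ∪ B expanded with a fresh unary relation R_a interpreted as {a} for each a ∈ dom(A), let K be a core of Â, and let S be the reduct of K to σ (dropping the fresh unary relations). Then there exists a homomorphism h' : A ∪ B → C with h'|_{dom(A)} = h if and only if there exists a homomorphism h'' : A ∪ S → C with h''|_{dom(A)} = h. -/
namespace PTEval

/-- A σ-structure with an explicit domain, a subset of an ambient type `U`:
all tuples in relations lie within the domain. -/
structure SStr (σ : Sig) (U : Type) where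
  dom : Set U
  rel : ∀ R : σ.Rel, Set (Fin (σ.ar R) → U)
  mem_dom : ∀ R t, t ∈ rel R → ∀ i, t i ∈ dom

/-- `h` is a homomorphism from `X` to `Y`: it maps `dom(X)` into `dom(Y)`
and preserves all relations. -/
def isSHom {σ : Sig} {U W : Type} (h : U → W) (X : SStr σ U) (Y : SStr σ W) : Prop :=
  Set.MapsTo h X.dom Y.dom ∧
    ∀ (R : σ.Rel) (t : Fin (σ.ar R) → U), t ∈ X.rel R → (fun i => h (t i)) ∈ Y.rel R

/-- The union `A ∪ B` of two σ-structures over the same ambient type. -/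
def SStr.union {σ : Sig} {U : Type} (X Y : SStr σ U) : SStr σ U where
  dom := X.dom ∪ Y.dom
  rel R := X.rel R ∪ Y.rel R
  mem_dom := by
    rintro R t (ht | ht) i
    · exact Or.inl (X.mem_dom R t ht i)
    · exact Or.inr (Y.mem_dom R t ht i)

/-- The substructure of `X` induced on the subset `S`. -/
def SStr.induce {σ : Sig} {U : Type} (X : SStr σ U) (S : Set U) : SStr σ U where
  dom := X.dom ∩ S
  rel R := {t ∈ X.rel R | ∀ i, t i ∈ S}
  mem_dom := fun R t ht i => ⟨X.mem_dom R t ht.1 i, ht.2 i⟩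

/-- `K` is a core of `X`: an induced substructure of `X`, minimal with respect
to domain inclusion, such that there is a homomorphism `X → K`. -/
def IsCoreOf {σ : Sig} {U : Type} (K X : SStr σ U) : Prop :=
  ∃ S : Set U, S ⊆ X.dom ∧ K = X.induce S ∧
    (∃ h : U → U, isSHom h X K) ∧
    ∀ S' : Set U, S' ⊂ S → ¬ ∃ h : U → U, isSHom h X (X.induce S')

/-- The signature `σ` expanded by a fresh unary relation symbol `R_a`
for every `a : I`. -/
def expSig (σ : Sig) (I : Type) : Sig :=
  ⟨σ.Rel ⊕ I, Sum.elim σ.ar fun _ => 1⟩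

/-- The structure `Â`: the union `A ∪ B` expanded with a fresh unary relation
`R_a` interpreted as `{a}` for each `a ∈ dom(A)`. -/
def hatStr {σ : Sig} {U : Type} (A B : SStr σ U) : SStr (expSig σ ↥A.dom) U where
  dom := A.dom ∪ B.dom
  rel R :=
    match R with
    | Sum.inl R₀ => A.rel R₀ ∪ B.rel R₀
    | Sum.inr a => {t | t = fun _ => (a : U)}
  mem_dom := by
    rintro (R₀ | a) t ht i
    · rcases ht with ht | ht
      · exact Or.inl (A.mem_dom R₀ t ht i)
      · exact Or.inr (B.mem_dom R₀ t ht i)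
    · simp only [Set.mem_setOf_eq] at ht
      subst ht
      exact Or.inl a.2

/-- The reduct of a structure over the expanded signature back to `σ`:
drop the fresh unary relations, keeping the domain. -/
def reduct {σ : Sig} {I U : Type} (K : SStr (expSig σ I) U) : SStr σ U where
  dom := K.dom
  rel R := K.rel (Sum.inl R)
  mem_dom := fun R t ht i => K.mem_dom (Sum.inl R) t ht i

/-- Let `A`, `B`, `C` be σ-structures, `h : A → C` a
homomorphism, `Â` the expansion of `A ∪ B` with a fresh unary relation `{a}`
for each `a ∈ dom(A)`, `K` a core of `Â` and `S` the reduct of `K` to `σ`.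
Then `h` extends to a homomorphism `A ∪ B → C` iff it extends to a
homomorphism `A ∪ S → C`. -/
theorem stmt3 {σ : Sig} {U W : Type} [Finite U] [Finite W]
    (A B : SStr σ U) (C : SStr σ W) (h : U → W) (hhom : isSHom h A C)
    (K : SStr (expSig σ ↥A.dom) U) (hK : IsCoreOf K (hatStr A B)) :
    (∃ h' : U → W, isSHom h' (A.union B) C ∧ ∀ a ∈ A.dom, h' a = h a) ↔
      (∃ h'' : U → W, isSHom h'' (A.union (reduct K)) C ∧ ∀ a ∈ A.dom, h'' a = h a) := by
  obtain ⟨S, hSsub, hKeq, ⟨g, hg⟩, -⟩ := hK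
  subst hKeq
  -- g fixes every element of A.dom
  have hgfix : ∀ a ∈ A.dom, g a = a := by
    intro a ha
    have hmem : (fun _ => a) ∈ (hatStr A B).rel (Sum.inr ⟨a, ha⟩) := rfl
    have := hg.2 (Sum.inr ⟨a, ha⟩) _ hmem
    have h1 : (fun i => g ((fun _ => a) i)) ∈ (hatStr A B).rel (Sum.inr ⟨a, ha⟩) := this.1
    have h2 : (fun _ : Fin ((expSig σ ↥A.dom).ar (Sum.inr ⟨a, ha⟩)) => g a)
        = (fun _ => a) := h1
    exact congrFun h2 ⟨0, Nat.one_pos⟩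
  constructor
  · rintro ⟨h', ⟨hd, hr⟩, hext⟩
    refine ⟨h', ⟨?_, ?_⟩, hext⟩
    · rintro x (hx | hx)
      · exact hd (Or.inl hx)
      · exact hd hx.1
    · rintro R t (ht | ht)
      · exact hr R t (Or.inl ht)
      · exact hr R t ht.1
  · rintro ⟨h'', ⟨hd, hr⟩, hext⟩
    refine ⟨fun x => h'' (g x), ⟨?_, ?_⟩, ?_⟩
    · intro x hx
      exact hd (Or.inr (hg.1 hx))
    · intro R t ht
      have := hg.2 (Sum.inl R) t ht
      exact hr R (fun i => g (t i)) (Or.inr this)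
    · intro a ha
      show h'' (g a) = h a
      rw [hgfix a ha]
      exact hext a ha

end PTEval
end

section
/- Let p = ((T,r), λ) be a projection-free well-designed pattern tree over a relational signature σ (with the children of each node linearly ordered), D a database, μ a pp-solution of p over D, and T_μ the unique maximal witnessing subtree. Then for every child node t' of T_μ, there exists a homomorphism ν : λ(t') → D that agrees with μ on var(t') ∩ var(T_{μ,≺t'}) if and only if there exists a homomorphism ν' : λ(t') → D that agrees with μ on var(t') ∩ dom(μ). Consequently, μ ∈ p(D) if and only if μ is a pp-solution and no child t' of T_μ admits a homomorphism λ(t') → D agreeing with μ on var(t') ∩ dom(μ). -/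
namespace PTEval

private lemma anc_le {N : Type} [LinearOrder N] (T : RootedTree N)
    (horder₂ : ∀ t : N, t ≠ T.root → T.parent t < t) :
    ∀ (n : ℕ) (a b : N), T.parent^[n] b = a → a ≤ b := by
  intro n
  induction n with
  | zero => intro a b h; simp at h; exact le_of_eq h.symm
  | succ n ih =>
    intro a b h
    rw [Function.iterate_succ_apply] at h
    have h1 : a ≤ T.parent b := ih a (T.parent b) h
    by_cases hb : b = T.root
    · subst hb; rw [T.parent_root] at h1; exact h1
    · exact le_of_lt (lt_of_le_of_lt h1 (horder₂ b hb))

private lemma anc_mem {N : Type} (T : RootedTree N) {S : Set N}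
    (hS : T.IsRootedSubtree S) :
    ∀ (n : ℕ) (b : N), b ∈ S → T.parent^[n] b ∈ S := by
  intro n
  induction n with
  | zero => intro b hb; simpa using hb
  | succ n ih =>
    intro b hb
    rw [Function.iterate_succ_apply]
    exact ih (T.parent b) (hS.2 b hb)

private lemma mem_varsLam {σ : Sig} {V N : Type} (lam : N → Set (Atom σ V)) (S : Set N)
    (v : V) : v ∈ varsLam lam S ↔ ∃ t ∈ S, v ∈ varsOf (lam t) := by
  simp only [varsLam, varsOf, lamOf, Set.mem_iUnion, Set.mem_setOf_eq]
  tauto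

/-- Let `p = ((T,r),λ)` be a projection-free well-designed
pattern tree with the nodes ordered by the depth-first left-to-right traversal
order `<` (characterized by: the root is least, every non-root node comes
after its parent, and the descendants of any node form an interval), let `μ`
be a pp-solution over `D` with maximal witnessing subtree `T_μ`. Then for every
child `t'` of `T_μ`, a homomorphism `λ(t') → D` agreeing with `μ` on
`var(t') ∩ var(T_{μ,≺t'})` exists iff one agreeing with `μ` on
`var(t') ∩ dom(μ)` exists; consequently `μ ∈ p(D)` iff `μ` is a pp-solution
and no child `t'` of `T_μ` admits a homomorphism `λ(t') → D` agreeing with `μ`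
on `var(t') ∩ dom(μ)`. -/
theorem stmt8 {σ : Sig} {N V A : Type} [Finite N] [Finite A] [LinearOrder N]
    (T : RootedTree N) (lam : N → Set (Atom σ V)) (hlamfin : ∀ t : N, (lam t).Finite)
    -- well-designedness: for every variable, the set of nodes containing it is connected
    (hwd : ∀ v : V, T.IsConnectedSet {t : N | v ∈ varsOf (lam t)})
    -- `<` is a depth-first left-to-right traversal order of `T`:
    (horder₁ : ∀ t : N, T.root ≤ t)
    (horder₂ : ∀ t : N, t ≠ T.root → T.parent t < t)
    (horder₃ : ∀ u v w : N, u < v → v < w → T.anc u w → T.anc u v)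
    (D : Db σ A) (dμ : Set V) (μ : V → A) (hdom : dμ ⊆ varsLam lam Set.univ)
    (Tμ : Set N)
    (hTμ : ppWitness T lam D dμ μ Tμ ∧ ∀ S : Set N, ppWitness T lam D dμ μ S → S ⊆ Tμ) :
    (∀ t' : N, T.IsChildOf Tμ t' →
      ((∃ ν : V → A, (∀ τ ∈ lam t', satAtom ν D τ) ∧
          ∀ v ∈ varsOf (lam t') ∩ varsLam lam {s ∈ Tμ | s < t'}, ν v = μ v) ↔
        (∃ ν' : V → A, (∀ τ ∈ lam t', satAtom ν' D τ) ∧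
          ∀ v ∈ varsOf (lam t') ∩ dμ, ν' v = μ v)))
    ∧
    (((∃ S : Set N, ppWitness T lam D dμ μ S) ∧
        ∀ t' : N, T.IsChildOf Tμ t' →
          ¬ ∃ ν : V → A, (∀ τ ∈ lam t', satAtom ν D τ) ∧
            ∀ v ∈ varsOf (lam t') ∩ varsLam lam {s ∈ Tμ | s < t'}, ν v = μ v) ↔
      ((∃ S : Set N, ppWitness T lam D dμ μ S) ∧
        ∀ t' : N, T.IsChildOf Tμ t' →
          ¬ ∃ ν' : V → A, (∀ τ ∈ lam t', satAtom ν' D τ) ∧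
            ∀ v ∈ varsOf (lam t') ∩ dμ, ν' v = μ v)) := by
  obtain ⟨⟨hsub, hvars, hmaps⟩, _hmax⟩ := hTμ
  -- key set equality
  have key : ∀ t' : N, T.IsChildOf Tμ t' →
      varsOf (lam t') ∩ varsLam lam {s ∈ Tμ | s < t'} = varsOf (lam t') ∩ dμ := by
    intro t' ⟨ht'notin, ht'par⟩
    apply Set.Subset.antisymm
    · intro v ⟨hv1, hv2⟩
      refine ⟨hv1, ?_⟩
      rw [← hvars]
      rw [mem_varsLam] at hv2 ⊢
      obtain ⟨t, ht, hvt⟩ := hv2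
      exact ⟨t, ht.1, hvt⟩
    · intro v ⟨hv1, hv2⟩
      refine ⟨hv1, ?_⟩
      rw [← hvars, mem_varsLam] at hv2
      obtain ⟨s, hs, hvs⟩ := hv2
      rcases hwd v with hempty | ⟨top, htop, hconn⟩
      · exfalso
        have : t' ∈ ({t : N | v ∈ varsOf (lam t)} : Set N) := hv1
        rw [hempty] at this
        exact this
      · obtain ⟨n, hn⟩ := (hconn t' hv1).1
        have hne : top ≠ t' := by
          intro h
          subst h
          obtain ⟨m, hm⟩ := (hconn s hvs).1
          exact ht'notin (hm ▸ anc_mem T hsub m s hs)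
        have hnpos : n ≠ 0 := by
          intro h; subst h; exact hne hn.symm
        -- top is an ancestor of parent t', hence in Tμ
        have htopTμ : top ∈ Tμ := by
          obtain ⟨k, rfl⟩ := Nat.exists_eq_succ_of_ne_zero hnpos
          rw [Function.iterate_succ_apply] at hn
          exact hn ▸ anc_mem T hsub k (T.parent t') ht'par
        have htoplt : top < t' :=
          lt_of_le_of_ne (anc_le T horder₂ n top t' hn) hne
        rw [mem_varsLam]
        exact ⟨top, ⟨htopTμ, htoplt⟩, htop⟩
  constructor
  · intro t' ht'
    rw [key t' ht']
  · constructor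
    · rintro ⟨hex, hno⟩
      exact ⟨hex, fun t' ht' => (key t' ht') ▸ hno t' ht'⟩
    · rintro ⟨hex, hno⟩
      exact ⟨hex, fun t' ht' => (key t' ht').symm ▸ hno t' ht'⟩


end PTEval
end

section
/- Let p = ((T,r), λ, X) be a well-designed pattern tree over a relational signature σ with free variables X ⊆ var(T), and let D be a database. Then a mapping μ with dom(μ) ⊆ X satisfies μ ∈ p(D) if and only if there exist a subtree T' of T containing r with var(T') ∩ X = dom(μ) and a mapping μ' with dom(μ') = var(T') extending μ such that μ' : λ(T') → D and, for every child node t of T', there is no homomorphism ν : λ(t) → D agreeing with μ' on var(t) ∩ var(T'). -/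
namespace PTEval

/-- `ν` (with domain of definition `dν`) is a solution of the projection-free
well-designed pattern tree `(T,λ)` over `D`: it is a pp-solution and no child
`t` of its maximal witnessing subtree `T_ν` admits a homomorphism
`λ(t) → D` agreeing with `ν` on `var(t) ∩ dom(ν)`. -/
def isSolutionPF {σ : Sig} {V N A : Type} (T : RootedTree N) (lam : N → Set (Atom σ V))
    (D : Db σ A) (dν : Set V) (ν : V → A) : Prop :=
  ∃ S : Set N, ppWitness T lam D dν ν S ∧
    (∀ S' : Set N, ppWitness T lam D dν ν S' → S' ⊆ S) ∧
    ∀ t : N, T.IsChildOf S t →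
      ¬ ∃ g : V → A, (∀ τ ∈ lam t, satAtom g D τ) ∧
        ∀ v ∈ varsOf (lam t) ∩ dν, g v = ν v

/-- For a well-designed pattern tree `p = ((T,r),λ,X)` and a
database `D`, a mapping `μ` with `dom(μ) ⊆ X` satisfies `μ ∈ p(D)` (i.e. `μ` is
the restriction to `X` of a solution of the projection-free tree) iff there are
a subtree `T'` of `T` containing `r` with `var(T') ∩ X = dom(μ)` and a mapping
`μ'` with domain `var(T')` extending `μ` such that `μ' : λ(T') → D` and no
child `t` of `T'` admits a homomorphism `λ(t) → D` agreeing with `μ'` on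
`var(t) ∩ var(T')`. -/
theorem stmt9 {σ : Sig} {N V A : Type} [Finite N] [Finite A]
    (T : RootedTree N) (lam : N → Set (Atom σ V)) (hlamfin : ∀ t : N, (lam t).Finite)
    (X : Set V) (hX : X ⊆ varsLam lam Set.univ)
    (hwd : ∀ v : V, T.IsConnectedSet {t : N | v ∈ varsOf (lam t)})
    (D : Db σ A) (dm : Set V) (μ : V → A) (hdm : dm ⊆ X) :
    (∃ (dν : Set V) (ν : V → A), isSolutionPF T lam D dν ν ∧
        dm = dν ∩ X ∧ ∀ v ∈ dm, ν v = μ v) ↔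
      (∃ T' : Set N, T.IsRootedSubtree T' ∧ varsLam lam T' ∩ X = dm ∧
        ∃ μ' : V → A, (∀ v ∈ dm, μ' v = μ v) ∧
          mapsInto (varsLam lam T') μ' (lamOf lam T') D ∧
          ∀ t : N, T.IsChildOf T' t →
            ¬ ∃ g : V → A, (∀ τ ∈ lam t, satAtom g D τ) ∧
              ∀ v ∈ varsOf (lam t) ∩ varsLam lam T', g v = μ' v) := by
  constructor
  · rintro ⟨dν, ν, ⟨S, ⟨hsub, hvars, hmaps⟩, hmax, hchild⟩, hdmX, hagree⟩
    refine ⟨S, hsub, by rw [hvars, ← hdmX], ν, hagree, by rw [hvars]; exact hmaps, ?_⟩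
    intro t ht
    have h := hchild t ht
    rw [hvars]
    exact h
  · rintro ⟨T', hsub, hvarsX, μ', hagree, hmaps, hchild⟩
    refine ⟨varsLam lam T', μ', ⟨T', ⟨hsub, rfl, hmaps⟩, ?_, hchild⟩, hvarsX.symm,
      fun v hv => hagree v hv⟩
    rintro S' ⟨hsub', hvars', hmaps'⟩ t htS'
    by_contra htT'
    classical
    have hS'mem : ∀ k : ℕ, T.parent^[k] t ∈ S' := by
      intro k
      induction k with
      | zero => exact htS'
      | succ k ih =>
        rw [Function.iterate_succ_apply']
        exact hsub'.2 _ ih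
    have hex : ∃ n : ℕ, T.parent^[n] t ∈ T' := by
      obtain ⟨n, hn⟩ := T.reaches_root t
      exact ⟨n, hn ▸ hsub.1⟩
    let n := Nat.find hex
    have hn0 : n ≠ 0 := by
      intro h
      have := Nat.find_spec hex
      rw [show n = Nat.find hex from rfl] at h
      rw [h] at this
      exact htT' this
    obtain ⟨m, hm⟩ := Nat.exists_eq_succ_of_ne_zero hn0
    set t' := T.parent^[m] t with ht'
    have ht'notin : t' ∉ T' := Nat.find_min hex (by omega)
    have hpar : T.parent t' ∈ T' := by
      have h1 : T.parent^[n] t ∈ T' := Nat.find_spec hex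
      rw [hm, Function.iterate_succ_apply'] at h1
      exact h1
    refine hchild t' ⟨ht'notin, hpar⟩ ⟨μ', ?_, fun v _ => rfl⟩
    intro τ hτ
    refine hmaps'.2 τ ?_
    simp only [lamOf, Set.mem_iUnion]
    exact ⟨t', hS'mem m, hτ⟩


end PTEval
end

section
/- Let A be a finite set of relational atoms over a signature σ, I ⊆ var(A) a set of variables, D a database, and μ : I → dom(D) a mapping. Define the interface components of A with respect to I as the family consisting of (1) the singleton sets {τ} for each atom τ ∈ A with var(τ) ⊆ I, and (2) for each connected component C of the Gaifman graph of A restricted to var(A) \ I, the set {τ ∈ A : var(τ) ∩ C ≠ ∅}. Then there exists a mapping ν : var(A) → dom(D) extending μ with ν : A → D if and only if for every interface component S there exists a mapping ν_S : var(S) → dom(D) extending μ|_{I ∩ var(S)} with ν_S : S → D. -/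
namespace PTEval

/-- Adjacency in the Gaifman graph of the set of atoms `𝒜`: two distinct
variables are adjacent iff they occur together in some atom of `𝒜`. -/
def gaifmanAdj {σ : Sig} {V : Type} (𝒜 : Set (Atom σ V)) (u v : V) : Prop :=
  u ≠ v ∧ ∃ τ ∈ 𝒜, u ∈ τ.vars ∧ v ∈ τ.vars

/-- Reachability in the Gaifman graph of `𝒜` restricted to the vertex set `W`. -/
def reachIn {σ : Sig} {V : Type} (𝒜 : Set (Atom σ V)) (W : Set V) : V → V → Prop :=
  Relation.ReflTransGen (fun a b => a ∈ W ∧ b ∈ W ∧ gaifmanAdj 𝒜 a b)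

/-- `S` is an interface component of `𝒜` with respect to `I`: either a
singleton `{τ}` with `var(τ) ⊆ I`, or the set of atoms of `𝒜` meeting a
connected component of the Gaifman graph of `𝒜` restricted to `var(𝒜) \ I`. -/
def IsInterfaceComponent {σ : Sig} {V : Type} (𝒜 : Set (Atom σ V)) (I : Set V)
    (S : Set (Atom σ V)) : Prop :=
  (∃ τ ∈ 𝒜, τ.vars ⊆ I ∧ S = {τ}) ∨
    (∃ w ∈ varsOf 𝒜 \ I,
      S = {τ ∈ 𝒜 | ∃ v ∈ τ.vars, reachIn 𝒜 (varsOf 𝒜 \ I) w v})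

/-- For a finite set of atoms `𝒜`, a set `I ⊆ var(𝒜)` of
interface variables, a database `D` and a mapping `μ : I → dom(D)`:
there is a mapping `ν : var(𝒜) → dom(D)` extending `μ` with `ν : 𝒜 → D`
iff for every interface component `S` there is a mapping `ν_S` extending
`μ|_{I ∩ var(S)}` with `ν_S : S → D`. -/
theorem stmt10 {σ : Sig} {V A : Type} [Finite A]
    (𝒜 : Set (Atom σ V)) (h𝒜 : 𝒜.Finite) (I : Set V) (hI : I ⊆ varsOf 𝒜)
    (D : Db σ A) (μ : V → A) :
    (∃ ν : V → A, (∀ v ∈ I, ν v = μ v) ∧ ∀ τ ∈ 𝒜, satAtom ν D τ) ↔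
      ∀ S : Set (Atom σ V), IsInterfaceComponent 𝒜 I S →
        ∃ νS : V → A, (∀ v ∈ I ∩ varsOf S, νS v = μ v) ∧ ∀ τ ∈ S, satAtom νS D τ := by
  classical
  constructor
  · rintro ⟨ν, hνI, hνsat⟩ S hS
    refine ⟨ν, fun v hv => hνI v hv.1, fun τ hτ => hνsat τ ?_⟩
    rcases hS with ⟨τ', hτ'𝒜, _, rfl⟩ | ⟨w, hw, rfl⟩
    · rcases hτ with rfl; exact hτ'𝒜
    · exact hτ.1
  · intro h
    set W : Set V := varsOf 𝒜 \ I with hW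
    have hsymm : ∀ a b, (a ∈ W ∧ b ∈ W ∧ gaifmanAdj 𝒜 a b) →
        (b ∈ W ∧ a ∈ W ∧ gaifmanAdj 𝒜 b a) := by
      rintro a b ⟨ha, hb, hne, τ, hτ, hua, hub⟩
      exact ⟨hb, ha, hne.symm, τ, hτ, hub, hua⟩
    have hreachsymm : ∀ a b, reachIn 𝒜 W a b → reachIn 𝒜 W b a := by
      intro a b hab
      induction hab with
      | refl => exact .refl
      | tail _ hbc ih => exact .trans (.single (hsymm _ _ hbc)) ih
    set compOf : V → Set (Atom σ V) :=
      fun v => {τ ∈ 𝒜 | ∃ x ∈ τ.vars, reachIn 𝒜 W v x} with hcomp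
    have hcompeq : ∀ u v, reachIn 𝒜 W u v → compOf u = compOf v := by
      intro u v huv
      ext τ
      constructor
      · rintro ⟨hτ, x, hx, hr⟩; exact ⟨hτ, x, hx, (hreachsymm _ _ huv).trans hr⟩
      · rintro ⟨hτ, x, hx, hr⟩; exact ⟨hτ, x, hx, huv.trans hr⟩
    set g : Set (Atom σ V) → V → A := fun S =>
      if hS : IsInterfaceComponent 𝒜 I S then Classical.choose (h S hS) else μ
      with hgdef
    have hg1 : ∀ S, IsInterfaceComponent 𝒜 I S → ∀ v ∈ I ∩ varsOf S, g S v = μ v := by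
      intro S hS v hv
      simp only [hgdef, dif_pos hS]
      exact (Classical.choose_spec (h S hS)).1 v hv
    have hg2 : ∀ S, IsInterfaceComponent 𝒜 I S → ∀ τ ∈ S, satAtom (g S) D τ := by
      intro S hS
      simp only [hgdef, dif_pos hS]
      exact (Classical.choose_spec (h S hS)).2
    set ν : V → A := fun v => if v ∈ W then g (compOf v) v else μ v with hνdef
    have hνI : ∀ v ∈ I, ν v = μ v := by
      intro v hv
      have hvW : v ∉ W := fun hw => hw.2 hv
      simp [hνdef, hvW]
    refine ⟨ν, hνI, ?_⟩
    intro τ hτ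
    by_cases hsub : τ.vars ⊆ I
    · have hS : IsInterfaceComponent 𝒜 I {τ} := Or.inl ⟨τ, hτ, hsub, rfl⟩
      have hsat := hg2 _ hS τ rfl
      have heq : (fun i => ν (τ.args i)) = (fun i => g {τ} (τ.args i)) := by
        funext i
        have hi : τ.args i ∈ I := hsub ⟨i, rfl⟩
        have hiv : τ.args i ∈ varsOf ({τ} : Set (Atom σ V)) :=
          Set.mem_biUnion rfl ⟨i, rfl⟩
        rw [hνI _ hi, hg1 _ hS _ ⟨hi, hiv⟩]
      show (fun i => ν (τ.args i)) ∈ D.rel τ.R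
      rw [heq]; exact hsat
    · rw [Set.not_subset] at hsub
      obtain ⟨u, huτ, huI⟩ := hsub
      have huW : u ∈ W := ⟨Set.mem_biUnion hτ huτ, huI⟩
      have hS : IsInterfaceComponent 𝒜 I (compOf u) := Or.inr ⟨u, huW, rfl⟩
      have hτS : τ ∈ compOf u := ⟨hτ, u, huτ, Relation.ReflTransGen.refl⟩
      have hsat := hg2 _ hS τ hτS
      have heq : (fun i => ν (τ.args i)) = (fun i => g (compOf u) (τ.args i)) := by
        funext i
        by_cases hi : τ.args i ∈ I
        · have hiv : τ.args i ∈ varsOf (compOf u) :=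
            Set.mem_biUnion hτS ⟨i, rfl⟩
          have hiW : τ.args i ∉ W := fun hw => hw.2 hi
          have h1 : ν (τ.args i) = μ (τ.args i) := by simp [hνdef, hiW]
          rw [h1, hg1 _ hS _ ⟨hi, hiv⟩]
        · have hiW : τ.args i ∈ W := ⟨Set.mem_biUnion hτ ⟨i, rfl⟩, hi⟩
          have hreach : reachIn 𝒜 W u (τ.args i) := by
            by_cases hue : u = τ.args i
            · exact hue ▸ Relation.ReflTransGen.refl
            · exact Relation.ReflTransGen.single
                ⟨huW, hiW, hue, τ, hτ, huτ, ⟨i, rfl⟩⟩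
          have h1 : ν (τ.args i) = g (compOf (τ.args i)) (τ.args i) := by
            simp [hνdef, hiW]
          rw [h1, hcompeq _ _ hreach]
      show (fun i => ν (τ.args i)) ∈ D.rel τ.R
      rw [heq]; exact hsat

end PTEval
end
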